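/- arXiv:2507.13821 — 2 statements merged into one kernel-verified Lean document; each statement's English description precedes it below -/
import Mathlib

section
/- Let G be a connected d-regular graph (d ≥ 3) with n vertices, m edges and adjacency eigenvalues λ₁,...,λₙ. Then the characteristic polynomial of the skew-symmetric adjacency matrix of the oriented line graph L⃗(G) equals x^{2(m−n)} · ∏_{i=1}^{n} (x² + d² − λᵢ²). -/
open Polynomial Matrix
open scoped Classical

/-- Vertex type of the oriented line graph: ordered pairs of adjacent vertices. -/
abbrev OLV {V : Type*} (G : SimpleGraph V) := {p : V × V // G.Adj p.1 p.2}

/-- Arc relation of the oriented line graph: from (u,v) to (v,w) when u ≠ w. -/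
def olArc {V : Type*} (G : SimpleGraph V) (a b : OLV G) : Prop :=
  a.1.2 = b.1.1 ∧ a.1.1 ≠ b.1.2

/-- Underlying undirected graph L*(G) of the oriented line graph. -/
def Lstar {V : Type*} (G : SimpleGraph V) : SimpleGraph (OLV G) :=
  SimpleGraph.fromRel (olArc G)

/-!
Let `T` and `H` be the tail and head incidence matrices of the arcs `(u, v)` of `G` against its
vertices. The skew adjacency matrix of the oriented line graph is `S = H Tᵀ - T Hᵀ = M N` with
`M = [H | -T]` and `N = [Tᵀ; Hᵀ]`, while `Tᵀ H = Hᵀ T = A` and `Tᵀ T = Hᵀ H = d I` give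
`N M = [[A, -d I], [d I, -A]]`. Hence `χ_S = X ^ (2m - 2n) χ_{NM}`, and as the blocks of `N M`
commute, `χ_{NM}(x) = det ((x² + d²) I - A²) = ∏ᵢ (x² + d² - λᵢ²)`.
-/

namespace Matrix

variable {n R : Type*} [Fintype n] [DecidableEq n] [CommRing R]

theorem charpoly_comp (M : Matrix n n R) (p : R[X]) :
    M.charpoly.comp p = (scalar n p - M.map C).det := by
  rw [charpoly, ← coe_compRingHom_apply, RingHom.map_det]
  congr 1
  ext i j : 1
  by_cases h : i = j <;> simp [h, charmatrix, Matrix.diagonal]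

theorem charpoly_neg (M : Matrix n n R) :
    (-M).charpoly = (-1) ^ Fintype.card n * M.charpoly.comp (-X) := by
  rw [charpoly_comp, charpoly, ← det_smul, charmatrix]
  congr 1
  ext i j : 1
  by_cases h : i = j <;> simp [h, Matrix.diagonal, add_comm]

theorem expand_charpoly_mul_self (M : Matrix n n R) :
    expand R 2 (M * M).charpoly = M.charpoly * (-M).charpoly := by
  rw [expand_eq_comp_X_pow, charpoly_comp, charpoly, charpoly, ← det_mul, charmatrix, charmatrix]
  congr 1
  rw [_root_.map_neg, sub_neg_eq_add, RingHom.mapMatrix_apply, Matrix.map_mul]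
  simp only [scalar_apply, ← smul_one_eq_diagonal, sub_mul, mul_add, Matrix.smul_mul,
    Matrix.mul_smul, Matrix.one_mul, Matrix.mul_one, smul_smul, pow_two]
  abel

theorem charpoly_mul_self_of_charpoly_eq_prod [Nontrivial R] {ι : Type*} [Fintype ι]
    {M : Matrix n n R} {μ : ι → R} (hM : M.charpoly = ∏ i, (X - C (μ i))) :
    (M * M).charpoly = ∏ i, (X - C (μ i ^ 2)) := by
  have hcard : Fintype.card ι = Fintype.card n := by
    have hdeg := M.charpoly_natDegree_eq_dim
    rwa [hM, natDegree_prod_of_monic _ _ fun i _ => monic_X_sub_C (μ i), Finset.sum_congr rfl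
      fun i _ => natDegree_X_sub_C (μ i), Finset.sum_const, smul_eq_mul, mul_one,
      Finset.card_univ] at hdeg
  have hneg : (-M).charpoly = ∏ i, (X + C (μ i)) := by
    rw [charpoly_neg, hM, ← hcard, prod_comp, ← Finset.card_univ, ← Finset.prod_const,
      ← Finset.prod_mul_distrib]
    refine Finset.prod_congr rfl fun i _ => ?_
    simp only [sub_comp, X_comp, C_comp]
    ring
  apply expand_injective two_pos
  rw [expand_charpoly_mul_self, hM, hneg, map_prod, ← Finset.prod_mul_distrib]
  refine Finset.prod_congr rfl fun i _ => ?_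
  rw [map_sub, expand_X, expand_C, C_pow]
  ring

theorem det_fromBlocks_of_commute (A B C D : Matrix n n R) (hCD : Commute C D)
    (hD : IsRegular D.det) : (fromBlocks A B C D).det = (A * D - B * C).det := by
  -- Right multiplication by `[[D, 0], [-C, 1]]` clears the lower left block since `C D = D C`.
  have hmul : fromBlocks A B C D * fromBlocks D 0 (-C) 1 = fromBlocks (A * D - B * C) B 0 D := by
    rw [fromBlocks_multiply, hCD.eq]
    simp [sub_eq_add_neg]
  apply hD.right.eq_iff.mp
  have hdet := congrArg det hmul
  rwa [det_mul, det_fromBlocks_zero₁₂, det_fromBlocks_zero₂₁, det_one, mul_one] at hdet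

theorem charpoly_fromBlocks_neg_scalar (B : Matrix n n R) (c : R) :
    (fromBlocks B (-scalar n c) (scalar n c) (-B)).charpoly =
      (B * B).charpoly.comp (X ^ 2 + C (c ^ 2)) := by
  rw [charpoly, charmatrix_fromBlocks, det_fromBlocks_of_commute _ _ _ _ ?_
    (charpoly_monic (-B)).isRegular, charpoly_comp]
  · congr 1
    rw [charmatrix, charmatrix, RingHom.mapMatrix_apply, _root_.map_neg, RingHom.mapMatrix_apply,
      Matrix.map_neg _ (map_neg C), Matrix.map_mul]
    simp only [scalar_apply, diagonal_map (map_zero C)]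
    simp only [← smul_one_eq_diagonal, sub_mul, mul_add, Matrix.smul_mul, Matrix.mul_smul,
      Matrix.one_mul, Matrix.mul_one, smul_smul, mul_neg, neg_neg, sub_neg_eq_add, C_pow]
    module
  · rw [scalar_apply, diagonal_map (map_zero C), ← scalar_apply]
    exact (scalar_commute _ (fun _ => Commute.all _ _) _).neg_left

end Matrix

theorem SimpleGraph.IsRegularOfDegree.card_le_card_edgeFinset {V : Type*} [Fintype V]
    {G : SimpleGraph V} [DecidableRel G.Adj] {d : ℕ} (hreg : G.IsRegularOfDegree d)
    (hd : 2 ≤ d) :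
    Fintype.card V ≤ G.edgeFinset.card := by
  have h := G.sum_degrees_eq_twice_card_edges
  simp only [hreg.degree_eq, Finset.sum_const, Finset.card_univ, smul_eq_mul] at h
  nlinarith

namespace OLV

open SimpleGraph

variable {V : Type*} [Fintype V] (G : SimpleGraph V)

theorem card_eq_two_mul_card_edgeFinset : Fintype.card (OLV G) = 2 * G.edgeFinset.card := by
  rw [← dart_card_eq_twice_card_edges]
  exact Fintype.card_congr
    ⟨fun a => ⟨a.1, a.2⟩, fun d => ⟨d.toProd, d.adj⟩, fun _ => rfl, fun _ => rfl⟩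

theorem sum_eq_sum_adj {R : Type*} [AddCommMonoid R] (f : V → V → R) :
    ∑ a : OLV G, f a.1.1 a.1.2 = ∑ u, ∑ v, if G.Adj u v then f u v else 0 := by
  rw [← Finset.sum_subtype (Finset.univ.filter fun p : V × V => G.Adj p.1 p.2) (by simp)
    (fun p => f p.1 p.2), Finset.sum_filter, Fintype.sum_prod_type]

theorem sum_swap {R : Type*} [AddCommMonoid R] (f : V → V → R) :
    ∑ a : OLV G, f a.1.2 a.1.1 = ∑ a : OLV G, f a.1.1 a.1.2 := by
  rw [sum_eq_sum_adj G (fun u v => f v u), sum_eq_sum_adj, Finset.sum_comm]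
  simp only [G.adj_comm]

variable [DecidableEq V] (R : Type*)

def tailMatrix [Zero R] [One R] : Matrix (OLV G) V R := of fun a v => if a.1.1 = v then 1 else 0

def headMatrix [Zero R] [One R] : Matrix (OLV G) V R := of fun a v => if a.1.2 = v then 1 else 0

section Semiring

variable {R} [Semiring R]

theorem tailMatrix_transpose_mul_headMatrix :
    (tailMatrix G R)ᵀ * headMatrix G R = G.adjMatrix R := by
  ext u v
  simp only [mul_apply, transpose_apply, tailMatrix, headMatrix, of_apply]
  rw [sum_eq_sum_adj G fun x y => (if x = u then (1 : R) else 0) * if y = v then 1 else 0,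
    Finset.sum_eq_single u (fun x _ hx => by simp [hx]) (by simp),
    Finset.sum_eq_single v (fun y _ hy => by simp [hy]) (by simp)]
  simp [adjMatrix_apply]

theorem headMatrix_transpose_mul_tailMatrix :
    (headMatrix G R)ᵀ * tailMatrix G R = G.adjMatrix R := by
  rw [← tailMatrix_transpose_mul_headMatrix]
  ext u v
  simp only [mul_apply, transpose_apply, tailMatrix, headMatrix, of_apply]
  exact sum_swap G fun x y => (if x = u then (1 : R) else 0) * if y = v then 1 else 0

theorem tailMatrix_transpose_mul_self :
    (tailMatrix G R)ᵀ * tailMatrix G R = diagonal fun v => (G.degree v : R) := by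
  ext u v
  simp only [mul_apply, transpose_apply, tailMatrix, of_apply]
  rw [sum_eq_sum_adj G fun x _ => (if x = u then (1 : R) else 0) * if x = v then 1 else 0,
    Finset.sum_eq_single u (fun x _ hx => by simp [hx]) (by simp)]
  by_cases h : u = v <;> simp [h, ← card_neighborFinset_eq_degree, neighborFinset_eq_filter]

theorem headMatrix_transpose_mul_self :
    (headMatrix G R)ᵀ * headMatrix G R = diagonal fun v => (G.degree v : R) := by
  rw [← tailMatrix_transpose_mul_self]
  ext u v
  simp only [mul_apply, transpose_apply, tailMatrix, headMatrix, of_apply]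
  exact (sum_swap G fun _ y => (if y = u then (1 : R) else 0) * if y = v then 1 else 0).symm

end Semiring

theorem of_olArc_eq_headMatrix_mul_sub [Ring R] :
    (of fun a b : OLV G => if olArc G a b then (1 : R) else if olArc G b a then -1 else 0) =
      headMatrix G R * (tailMatrix G R)ᵀ - tailMatrix G R * (headMatrix G R)ᵀ := by
  ext a b
  simp only [Matrix.sub_apply, mul_apply, transpose_apply, tailMatrix, headMatrix, of_apply]
  simp only [olArc, mul_ite, mul_one, mul_zero, Finset.sum_ite_eq, Finset.mem_univ, if_true]
  split_ifs <;> grind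

end OLV

theorem stmt_2_general {V : Type*} [Fintype V] [DecidableEq V] (G : SimpleGraph V)
    (d n m : ℕ) (hd : 3 ≤ d) (hreg : G.IsRegularOfDegree d)
    (hn : Fintype.card V = n) (hm : G.edgeFinset.card = m)
    (lam : Fin n → ℝ)
    (hchar : (G.adjMatrix ℝ).charpoly = ∏ i, (X - C (lam i))) :
    (Matrix.of fun a b : OLV G =>
        if olArc G a b then (1 : ℝ) else if olArc G b a then -1 else 0).charpoly =
      X ^ (2 * (m - n)) * ∏ i, (X ^ 2 + C ((d : ℝ) ^ 2 - lam i ^ 2)) := by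
  set T := OLV.tailMatrix G ℝ
  set H := OLV.headMatrix G ℝ
  have hdeg : (diagonal fun v => (G.degree v : ℝ)) = scalar V (d : ℝ) := by
    simp only [hreg.degree_eq, scalar_apply]
  have hNM : fromRows Tᵀ Hᵀ * fromCols H (-T) =
      fromBlocks (G.adjMatrix ℝ) (-scalar V (d : ℝ)) (scalar V (d : ℝ))
        (-G.adjMatrix ℝ) := by
    rw [fromRows_mul_fromCols, Matrix.mul_neg, Matrix.mul_neg,
      OLV.tailMatrix_transpose_mul_headMatrix, OLV.tailMatrix_transpose_mul_self,
      OLV.headMatrix_transpose_mul_self, OLV.headMatrix_transpose_mul_tailMatrix, hdeg]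
  have hcard : Fintype.card (V ⊕ V) ≤ Fintype.card (OLV G) := by
    rw [Fintype.card_sum, OLV.card_eq_two_mul_card_edgeFinset]
    have hnm := hreg.card_le_card_edgeFinset (by omega)
    omega
  rw [OLV.of_olArc_eq_headMatrix_mul_sub, sub_eq_add_neg, ← Matrix.neg_mul,
    ← fromCols_mul_fromRows, charpoly_mul_comm_of_le _ _ hcard, hNM,
    charpoly_fromBlocks_neg_scalar,
    charpoly_mul_self_of_charpoly_eq_prod hchar, prod_comp, Fintype.card_sum,
    OLV.card_eq_two_mul_card_edgeFinset, hn, hm]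
  congr 1
  · rw [show 2 * m - (n + n) = 2 * (m - n) by omega]
  · refine Finset.prod_congr rfl fun i _ => ?_
    rw [sub_comp, X_comp, C_comp, C_sub]
    ring

theorem stmt_2 {V : Type*} [Fintype V] [DecidableEq V] (G : SimpleGraph V)
    (d n m : ℕ) (hd : 3 ≤ d) (hreg : G.IsRegularOfDegree d) (hconn : G.Connected)
    (hn : Fintype.card V = n) (hm : G.edgeFinset.card = m)
    (lam : Fin n → ℝ)
    (hchar : (G.adjMatrix ℝ).charpoly = ∏ i, (X - C (lam i))) :
    (Matrix.of fun a b : OLV G =>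
        if olArc G a b then (1 : ℝ) else if olArc G b a then -1 else 0).charpoly =
      X ^ (2 * (m - n)) * ∏ i, (X ^ 2 + C ((d : ℝ) ^ 2 - lam i ^ 2)) :=
  stmt_2_general G d n m hd hreg hn hm lam hchar
end

section
/- Let J be a graph and H a 2-lift of J arising from a signing s : E(J) → {+1,−1}. Then the characteristic polynomial of the adjacency matrix of H equals the product of the characteristic polynomial of the adjacency matrix of J and the characteristic polynomial of the signed adjacency matrix A_s of (J,s). -/
open Polynomial Matrix
open scoped Classical

/-!
Ordering the vertices of the lift as two copies of `V`, its adjacency matrix is the block matrix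
`[[A₊, A₋], [A₋, A₊]]`, where `A₊` and `A₋` are the adjacency matrices of the positive and of the
negative edges of `J`. The unitriangular change of basis `[[1, 0], [1, 1]]` makes it block upper
triangular with diagonal blocks `A₊ + A₋` and `A₊ - A₋`, which are the adjacency matrix and the
signed adjacency matrix of `J`. Unlike the basis `(x, 0) ± (x, 1)`, this needs no division by `2`.
-/

/-- The 2-lift of `J` associated with a signing `s` of its edges: edges with sign `+1`
lift to two parallel copies, edges with sign `-1` lift to two crossing copies. -/
def TwoLift {V : Type*} (J : SimpleGraph V) (s : V → V → ℤ) :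
    SimpleGraph (V × Bool) :=
  SimpleGraph.fromRel fun a b =>
    J.Adj a.1 b.1 ∧ ((s a.1 b.1 = 1 ∧ a.2 = b.2) ∨ (s a.1 b.1 = -1 ∧ a.2 ≠ b.2))

namespace Matrix

variable {n R : Type*} [Fintype n] [DecidableEq n] [CommRing R]

theorem det_fromBlocks_self_swap (A B : Matrix n n R) :
    (fromBlocks A B B A).det = (A + B).det * (A - B).det := by
  have hconj : fromBlocks A B B A * fromBlocks 1 0 1 1 =
      fromBlocks 1 0 1 1 * fromBlocks (A + B) B 0 (A - B) := by
    simp only [fromBlocks_multiply, Matrix.mul_one, Matrix.one_mul, Matrix.mul_zero,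
      Matrix.zero_mul, add_zero, zero_add]
    congr 1 <;> abel
  have hunit : (fromBlocks 1 0 1 1 : Matrix (n ⊕ n) (n ⊕ n) R).det = 1 := by
    simp
  simpa [det_mul, hunit, det_fromBlocks_zero₂₁] using congrArg det hconj

theorem charmatrix_add (A B : Matrix n n R) :
    charmatrix (A + B) = charmatrix A - B.map C := by
  simp only [charmatrix, map_add, RingHom.mapMatrix_apply, sub_add_eq_sub_sub]

theorem charpoly_fromBlocks_self_swap (A B : Matrix n n R) :
    (fromBlocks A B B A).charpoly = (A + B).charpoly * (A - B).charpoly := by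
  rw [charpoly, charmatrix_fromBlocks, det_fromBlocks_self_swap, charpoly, charpoly,
    charmatrix_add, sub_eq_add_neg A B, charmatrix_add, Matrix.map_neg _ fun _ => C_neg]
  simp only [sub_eq_add_neg]

end Matrix

section TwoLift

variable {V : Type*} {J : SimpleGraph V} {s : V → V → ℤ}

theorem twoLift_adj (hsymm : ∀ u v, s u v = s v u) {a b : V × Bool} :
    (TwoLift J s).Adj a b ↔
      J.Adj a.1 b.1 ∧ ((s a.1 b.1 = 1 ∧ a.2 = b.2) ∨ (s a.1 b.1 = -1 ∧ a.2 ≠ b.2)) := by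
  rw [TwoLift, SimpleGraph.fromRel_adj]
  constructor
  · rintro ⟨-, h | ⟨hJ, h⟩⟩
    · exact h
    · rw [hsymm]
      exact ⟨hJ.symm, by simpa only [eq_comm (a := b.2), ne_comm (a := b.2)] using h⟩
  · intro h
    exact ⟨fun hab => J.ne_of_adj h.1 (congrArg Prod.fst hab), Or.inl h⟩

noncomputable def signClassAdjMatrix (R : Type*) [Zero R] [One R] (J : SimpleGraph V)
    (s : V → V → ℤ) (c : ℤ) : Matrix V V R :=
  of fun u v => if J.Adj u v ∧ s u v = c then 1 else 0

theorem reindex_adjMatrix_twoLift (R : Type*) [Zero R] [One R] (hsymm : ∀ u v, s u v = s v u) :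
    reindex ((Equiv.prodComm V Bool).trans (Equiv.boolProdEquivSum V))
        ((Equiv.prodComm V Bool).trans (Equiv.boolProdEquivSum V)) ((TwoLift J s).adjMatrix R) =
      fromBlocks (signClassAdjMatrix R J s 1) (signClassAdjMatrix R J s (-1))
        (signClassAdjMatrix R J s (-1)) (signClassAdjMatrix R J s 1) := by
  ext (u | u) (v | v) <;> simp [twoLift_adj hsymm, signClassAdjMatrix]

variable (R : Type*) [Ring R]

theorem signClassAdjMatrix_one_add_neg_one
    (hsval : ∀ u v, J.Adj u v → s u v = 1 ∨ s u v = -1) :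
    signClassAdjMatrix R J s 1 + signClassAdjMatrix R J s (-1) = J.adjMatrix R := by
  ext u v
  by_cases huv : J.Adj u v
  · rcases hsval u v huv with h | h <;> simp [signClassAdjMatrix, huv, h]
  · simp [signClassAdjMatrix, huv]

theorem signClassAdjMatrix_one_sub_neg_one
    (hsval : ∀ u v, J.Adj u v → s u v = 1 ∨ s u v = -1) :
    signClassAdjMatrix R J s 1 - signClassAdjMatrix R J s (-1) =
      of fun u v => if J.Adj u v then (s u v : R) else 0 := by
  ext u v
  by_cases huv : J.Adj u v
  · rcases hsval u v huv with h | h <;> simp [signClassAdjMatrix, huv, h]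
  · simp [signClassAdjMatrix, huv]

end TwoLift

theorem stmt_14 {V : Type*} [Fintype V] [DecidableEq V] (J : SimpleGraph V)
    (s : V → V → ℤ) (hsymm : ∀ u v, s u v = s v u)
    (hsval : ∀ u v, J.Adj u v → s u v = 1 ∨ s u v = -1) :
    ((TwoLift J s).adjMatrix ℝ).charpoly =
      (J.adjMatrix ℝ).charpoly *
        (Matrix.of fun u v => if J.Adj u v then (s u v : ℝ) else 0).charpoly := by
  rw [← charpoly_reindex ((Equiv.prodComm V Bool).trans (Equiv.boolProdEquivSum V)),
    reindex_adjMatrix_twoLift ℝ hsymm, charpoly_fromBlocks_self_swap,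
    signClassAdjMatrix_one_add_neg_one ℝ hsval, signClassAdjMatrix_one_sub_neg_one ℝ hsval]
end
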